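/- Let F be a precompact subset of a Hilbert space H and let (T_n) be compact operators on H with ⟨T_n f − f, f⟩ → 0 for all f ∈ H. Then lim_{n→∞} sup_{f∈F} |⟨T_n f − f, f⟩| = 0. -/

import Mathlib

/-!
Polarization turns the convergence `⟪T n f, f⟫ → ⟪f, f⟫` of the quadratic forms into weak
convergence `T n y ⇀ y`, so Banach–Steinhaus, applied twice, bounds `‖T n‖` uniformly. The forms
`f ↦ ⟪T n f - f, f⟫` are then uniformly Lipschitz on bounded sets, hence equicontinuous, and
pointwise convergence of an equicontinuous family is uniform on the compact set `closure F`.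
-/

open scoped InnerProductSpace
open Filter Topology Metric

theorem EquicontinuousOn.tendstoUniformlyOn_of_tendsto {ι X α : Type*} [TopologicalSpace X]
    [UniformSpace α] {F : ι → X → α} {f : X → α} {K : Set X} {l : Filter ι}
    (hK : IsCompact K) (hF : EquicontinuousOn F K)
    (h : ∀ x ∈ K, Tendsto (fun i => F i x) l (𝓝 (f x))) : TendstoUniformlyOn F f l K := by
  have : CompactSpace K := isCompact_iff_compactSpace.mp hK
  rw [tendstoUniformlyOn_iff_tendstoUniformly_comp_coe]
  refine UniformFun.tendsto_iff_tendstoUniformly.mp <|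
    ((equicontinuous_restrict_iff F).mpr hF |>.tendsto_uniformFun_iff_pi l _).mpr ?_
  exact tendsto_pi_nhds.mpr fun x => h x x.2

section InnerProductSpace

variable {𝕜 E : Type*} [RCLike 𝕜] [NormedAddCommGroup E] [InnerProductSpace 𝕜 E]

theorem ContinuousLinearMap.norm_inner_map_self_sub_le (A : E →L[𝕜] E) (x y : E) :
    ‖⟪A x, x⟫_𝕜 - ⟪A y, y⟫_𝕜‖ ≤ ‖A‖ * (‖x‖ + ‖y‖) * ‖x - y‖ := by
  have hsplit : ⟪A x, x⟫_𝕜 - ⟪A y, y⟫_𝕜 = ⟪A (x - y), x⟫_𝕜 + ⟪A y, x - y⟫_𝕜 := by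
    simp only [map_sub, inner_sub_left, inner_sub_right]
    ring
  calc ‖⟪A x, x⟫_𝕜 - ⟪A y, y⟫_𝕜‖
      ≤ ‖A (x - y)‖ * ‖x‖ + ‖A y‖ * ‖x - y‖ := by
        rw [hsplit]
        exact (norm_add_le _ _).trans (add_le_add (norm_inner_le_norm _ _) (norm_inner_le_norm _ _))
    _ ≤ ‖A‖ * ‖x - y‖ * ‖x‖ + ‖A‖ * ‖y‖ * ‖x - y‖ := by
        gcongr <;> exact A.le_opNorm _
    _ = ‖A‖ * (‖x‖ + ‖y‖) * ‖x - y‖ := by ring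

theorem uniformEquicontinuousOn_inner_map_self {ι : Type*} {A : ι → E →L[𝕜] E} {C : ℝ}
    (hA : ∀ i, ‖A i‖ ≤ C) {s : Set E} (hs : Bornology.IsBounded s) :
    UniformEquicontinuousOn (fun i x => ⟪A i x, x⟫_𝕜) s := by
  obtain ⟨M, hM⟩ := hs.subset_closedBall 0
  refine LipschitzOnWith.uniformEquicontinuousOn _ (Real.toNNReal (C * (M + M))) fun i =>
    LipschitzOnWith.of_dist_le_mul fun x hx y hy => ?_
  have hxM : ‖x‖ ≤ M := mem_closedBall_zero_iff.mp (hM hx)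
  have hyM : ‖y‖ ≤ M := mem_closedBall_zero_iff.mp (hM hy)
  have hC : 0 ≤ C := (norm_nonneg _).trans (hA i)
  calc dist ⟪A i x, x⟫_𝕜 ⟪A i y, y⟫_𝕜 ≤ ‖A i‖ * (‖x‖ + ‖y‖) * ‖x - y‖ := by
        rw [dist_eq_norm]; exact (A i).norm_inner_map_self_sub_le x y
    _ ≤ C * (M + M) * dist x y := by rw [dist_eq_norm]; gcongr; exact hA i
    _ ≤ Real.toNNReal (C * (M + M)) * dist x y := by gcongr; exact Real.le_coe_toNNReal _

end InnerProductSpace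

section Polarization

variable {H : Type*} [NormedAddCommGroup H] [InnerProductSpace ℂ H]

theorem tendsto_inner_map_of_tendsto_inner_map_self {ι : Type*} {l : Filter ι}
    {T : ι → H →L[ℂ] H} {S : H →L[ℂ] H}
    (h : ∀ f, Tendsto (fun i => ⟪T i f, f⟫_ℂ) l (𝓝 ⟪S f, f⟫_ℂ)) (x y : H) :
    Tendsto (fun i => ⟪T i y, x⟫_ℂ) l (𝓝 ⟪S y, x⟫_ℂ) := by
  have polarization (A : H →L[ℂ] H) := inner_map_polarization (A : H →ₗ[ℂ] H) x y
  simp only [ContinuousLinearMap.coe_coe] at polarization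
  simp only [polarization]
  exact ((((h _).sub (h _)).add ((h _).const_mul _)).sub ((h _).const_mul _)).div_const _

theorem exists_norm_le_of_tendsto_inner_map_self [CompleteSpace H] {T : ℕ → H →L[ℂ] H}
    {S : H →L[ℂ] H} (h : ∀ f, Tendsto (fun n => ⟪T n f, f⟫_ℂ) atTop (𝓝 ⟪S f, f⟫_ℂ)) :
    ∃ C, ∀ n, ‖T n‖ ≤ C := by
  refine banach_steinhaus fun y => ?_
  obtain ⟨C, hC⟩ := banach_steinhaus (g := fun n => innerSL ℂ (T n y)) fun x => by
    obtain ⟨C, hC⟩ := (tendsto_inner_map_of_tendsto_inner_map_self h x y).norm.bddAbove_range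
    exact ⟨C, fun n => by simpa using hC ⟨n, rfl⟩⟩
  exact ⟨C, fun n => by simpa only [innerSL_apply_norm] using hC n⟩

end Polarization

theorem uniform_quadratic_form_decay_of_precompact_general
    {H : Type*} [NormedAddCommGroup H] [InnerProductSpace ℂ H] [CompleteSpace H]
    (T : ℕ → H →L[ℂ] H)
    (hconv : ∀ f : H,
      Filter.Tendsto (fun n => ⟪T n f - f, f⟫_ℂ) Filter.atTop (nhds 0))
    (F : Set H) (hF : IsCompact (closure F)) :
    ∀ ε > 0, ∃ N : ℕ, ∀ n ≥ N, ∀ f ∈ F, ‖⟪T n f - f, f⟫_ℂ‖ < ε := by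
  have hlim (f : H) :
      Tendsto (fun n => ⟪T n f, f⟫_ℂ) atTop (𝓝 ⟪ContinuousLinearMap.id ℂ H f, f⟫_ℂ) := by
    simpa [inner_sub_left] using (hconv f).add_const ⟪f, f⟫_ℂ
  obtain ⟨C, hC⟩ := exists_norm_le_of_tendsto_inner_map_self hlim
  have hC' (n : ℕ) : ‖T n - ContinuousLinearMap.id ℂ H‖ ≤ C + 1 :=
    (norm_sub_le _ _).trans (add_le_add (hC n) ContinuousLinearMap.norm_id_le)
  have hequi : EquicontinuousOn (fun n f => ⟪T n f - f, f⟫_ℂ) (closure F) :=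
    (uniformEquicontinuousOn_inner_map_self hC' hF.isBounded).equicontinuousOn
  have hunif := (hequi.tendstoUniformlyOn_of_tendsto hF fun f _ => hconv f).mono subset_closure
  intro ε hε
  obtain ⟨N, hN⟩ := eventually_atTop.mp (tendstoUniformlyOn_iff.mp hunif ε hε)
  exact ⟨N, fun n hn f hf => by simpa [dist_eq_norm'] using hN n hn f hf⟩

/-- If `F` is a precompact subset of a Hilbert space and `(T n)` are compact operators with
`⟪T n f - f, f⟫ → 0` for every `f`, then the quadratic forms vanish uniformly on `F`. -/
theorem uniform_quadratic_form_decay_of_precompact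
    {H : Type*} [NormedAddCommGroup H] [InnerProductSpace ℂ H] [CompleteSpace H]
    (T : ℕ → H →L[ℂ] H) (hT : ∀ n, IsCompactOperator (T n))
    (hconv : ∀ f : H,
      Filter.Tendsto (fun n => ⟪T n f - f, f⟫_ℂ) Filter.atTop (nhds 0))
    (F : Set H) (hF : IsCompact (closure F)) :
    ∀ ε > 0, ∃ N : ℕ, ∀ n ≥ N, ∀ f ∈ F, ‖⟪T n f - f, f⟫_ℂ‖ < ε :=
  uniform_quadratic_form_decay_of_precompact_general T hconv F hF
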